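/- arXiv:2007.04533 — 4 statements merged into one kernel-verified Lean document; each statement's English description precedes it below -/
import Mathlib

section
/- The Demazure operators satisfy the braid relation π_i π_{i+1} π_i = π_{i+1} π_i π_{i+1}. -/
open MvPolynomial

set_option maxHeartbeats 1600000

/-- The Demazure operators `π_i f := (x_i f - x_{i+1} s_i f)/(x_i - x_{i+1})` satisfy the
braid relation `π_i π_{i+1} π_i = π_{i+1} π_i π_{i+1}`.  Each application of `π_i` is
encoded by its defining equation `(x_i - x_{i+1}) * (π_i f) = x_i f - x_{i+1} s_i f`. -/
theorem demazure_braid (i : ℕ) (f a₁ a₂ a₃ b₁ b₂ b₃ : MvPolynomial ℕ ℤ)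
    (ha₁ : (X i - X (i + 1)) * a₁ = X i * f - X (i + 1) * rename (Equiv.swap i (i + 1)) f)
    (ha₂ : (X (i + 1) - X (i + 2)) * a₂ =
      X (i + 1) * a₁ - X (i + 2) * rename (Equiv.swap (i + 1) (i + 2)) a₁)
    (ha₃ : (X i - X (i + 1)) * a₃ = X i * a₂ - X (i + 1) * rename (Equiv.swap i (i + 1)) a₂)
    (hb₁ : (X (i + 1) - X (i + 2)) * b₁ =
      X (i + 1) * f - X (i + 2) * rename (Equiv.swap (i + 1) (i + 2)) f)
    (hb₂ : (X i - X (i + 1)) * b₂ = X i * b₁ - X (i + 1) * rename (Equiv.swap i (i + 1)) b₁)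
    (hb₃ : (X (i + 1) - X (i + 2)) * b₃ =
      X (i + 1) * b₂ - X (i + 2) * rename (Equiv.swap (i + 1) (i + 2)) b₂) :
    a₃ = b₃ := by
  set σ := Equiv.swap i (i + 1) with hσ
  set τ := Equiv.swap (i + 1) (i + 2) with hτ
  have hσi : σ i = i + 1 := Equiv.swap_apply_left _ _
  have hσi1 : σ (i + 1) = i := Equiv.swap_apply_right _ _
  have hσi2 : σ (i + 2) = i + 2 :=
    Equiv.swap_apply_of_ne_of_ne (by omega) (by omega)
  have hτi : τ i = i := Equiv.swap_apply_of_ne_of_ne (by omega) (by omega)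
  have hτi1 : τ (i + 1) = i + 2 := Equiv.swap_apply_left _ _
  have hτi2 : τ (i + 2) = i + 1 := Equiv.swap_apply_right _ _
  have hne1 : (X i - X (i + 1) : MvPolynomial ℕ ℤ) ≠ 0 :=
    sub_ne_zero.mpr (fun h => by have := X_injective h; omega)
  have hne2 : (X (i + 1) - X (i + 2) : MvPolynomial ℕ ℤ) ≠ 0 :=
    sub_ne_zero.mpr (fun h => by have := X_injective h; omega)
  have hne3 : (X i - X (i + 2) : MvPolynomial ℕ ℤ) ≠ 0 :=
    sub_ne_zero.mpr (fun h => by have := X_injective h; omega)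
  -- σ ∘ σ = id on polynomials
  have hσσ : ∀ p : MvPolynomial ℕ ℤ, rename ⇑σ (rename ⇑σ p) = p := fun p => by
    rw [rename_rename]
    have : ⇑σ ∘ ⇑σ = id := by funext n; exact Equiv.swap_apply_self _ _ n
    rw [this, rename_id, AlgHom.id_apply]
  have hττ : ∀ p : MvPolynomial ℕ ℤ, rename ⇑τ (rename ⇑τ p) = p := fun p => by
    rw [rename_rename]
    have : ⇑τ ∘ ⇑τ = id := by funext n; exact Equiv.swap_apply_self _ _ n
    rw [this, rename_id, AlgHom.id_apply]
  -- braid relation for the swaps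
  have hbraid : rename ⇑σ (rename ⇑τ (rename ⇑σ f)) = rename ⇑τ (rename ⇑σ (rename ⇑τ f)) := by
    rw [rename_rename, rename_rename, rename_rename, rename_rename]
    have hfun : (⇑σ ∘ ⇑τ) ∘ ⇑σ = (⇑τ ∘ ⇑σ) ∘ ⇑τ := by
      funext n
      simp only [Function.comp_apply, hσ, hτ, Equiv.swap_apply_def]
      split_ifs <;> omega
    rw [hfun]
  -- symmetry of a₁ and b₁
  have hS : rename ⇑σ a₁ = a₁ := by
    apply mul_left_cancel₀ hne1
    have E := congrArg (rename ⇑σ) ha₁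
    simp only [map_sub, map_mul, rename_X, hσi, hσi1, hσσ] at E
    linear_combination -E - ha₁
  have hT : rename ⇑τ b₁ = b₁ := by
    apply mul_left_cancel₀ hne2
    have E := congrArg (rename ⇑τ) hb₁
    simp only [map_sub, map_mul, rename_X, hτi1, hτi2, hττ] at E
    linear_combination -E - hb₁
  -- renamed versions of the defining equations
  have E2 := congrArg (rename ⇑τ) ha₁
  simp only [map_sub, map_mul, rename_X, hτi, hτi1] at E2
  have E4 := congrArg (rename ⇑σ) ha₂
  simp only [map_sub, map_mul, rename_X, hσi1, hσi2, hS] at E4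
  have E5 := congrArg (rename ⇑σ) E2
  simp only [map_sub, map_mul, rename_X, hσi, hσi1, hσi2, hbraid] at E5
  have E2' := congrArg (rename ⇑σ) hb₁
  simp only [map_sub, map_mul, rename_X, hσi1, hσi2] at E2'
  have E4' := congrArg (rename ⇑τ) hb₂
  simp only [map_sub, map_mul, rename_X, hτi, hτi1, hT] at E4'
  have E5' := congrArg (rename ⇑τ) E2'
  simp only [map_sub, map_mul, rename_X, hτi, hτi1, hτi2] at E5'
  -- cancel the three nonzero factors
  apply mul_left_cancel₀ hne1
  apply mul_left_cancel₀ hne2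
  apply mul_left_cancel₀ hne3
  linear_combination (X (i+1) - X (i+2)) * (X i - X (i+2)) * ha₃
    + (X i * (X i - X (i+2))) * ha₂
    - (X (i+1) * (X (i+1) - X (i+2))) * E4
    + (X i * X (i+1)) * ha₁
    - (X i * X (i+2)) * E2
    + (X (i+1) * X (i+2)) * E5
    - ((X i - X (i+1)) * (X i - X (i+2))) * hb₃
    - (X (i+1) * (X i - X (i+2))) * hb₂
    + (X (i+2) * (X i - X (i+1))) * E4'
    - (X i * X i) * hb₁
    + (X (i+1) * X (i+1)) * E2'
    - (X (i+2) * X (i+2)) * E5'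
end

section
/- If a permutation w is vexillary, then for any two cells (p,q), (i,j) in its essential set E(w), it is not the case that p < i and q < j (i.e., no essential cell lies strictly northwest of another). -/
/-- If a permutation `w ∈ S_n` (encoded as a permutation of `ℕ` fixing all `i ≥ n`) is
vexillary (avoids the pattern `2143`), then no cell of its essential set lies strictly
northwest of another: for `(p,q), (i,j) ∈ E(w)` it is not the case that `p < i` and
`q < j`.  Here `D(w) = {(p,q) : w p > q ∧ w⁻¹ q > p}` and
`E(w) = {(p,q) ∈ D(w) : (p+1,q) ∉ D(w) ∧ (p,q+1) ∉ D(w)}`. -/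
theorem vexillary_essential_set_nw (n : ℕ) (w : Equiv.Perm ℕ)
    (hw : ∀ i : ℕ, n ≤ i → w i = i)
    (hvex : ¬ ∃ i j k l : ℕ, i < j ∧ j < k ∧ k < l ∧ w j < w i ∧ w i < w l ∧ w l < w k) :
    ∀ p q i j : ℕ,
      ((q < w p ∧ p < w⁻¹ q) ∧
        ¬(q < w (p + 1) ∧ p + 1 < w⁻¹ q) ∧ ¬(q + 1 < w p ∧ p < w⁻¹ (q + 1))) →
      ((j < w i ∧ i < w⁻¹ j) ∧
        ¬(j < w (i + 1) ∧ i + 1 < w⁻¹ j) ∧ ¬(j + 1 < w i ∧ i < w⁻¹ (j + 1))) →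
      ¬(p < i ∧ q < j) := by
  rintro p q i j ⟨⟨hpq1, hpq2⟩, hpq3, hpq4⟩ ⟨⟨hij1, hij2⟩, _, _⟩ ⟨hpi, hqj⟩
  -- Fact A: w⁻¹ (q+1) ≤ p
  have hA : w⁻¹ (q + 1) ≤ p := by
    by_contra h
    push_neg at h
    apply hpq4
    refine ⟨?_, h⟩
    rcases lt_or_eq_of_le (Nat.succ_le_of_lt hpq1) with h' | h'
    · exact h'
    · exfalso
      have h'' : q + 1 = w p := by omega
      have : w⁻¹ (q + 1) = p := by rw [h'']; exact Equiv.symm_apply_apply w p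
      omega
  -- Fact B: w (p+1) ≤ q
  have hB : w (p + 1) ≤ q := by
    by_contra h
    push_neg at h
    apply hpq3
    refine ⟨h, ?_⟩
    rcases lt_or_eq_of_le (Nat.succ_le_of_lt hpq2) with h' | h'
    · exact h'
    · exfalso
      have h'' : p + 1 = w⁻¹ q := by omega
      have : w (p + 1) = q := by rw [h'']; exact Equiv.apply_symm_apply w q
      omega
  have hwa : w (w⁻¹ (q + 1)) = q + 1 := Equiv.apply_symm_apply w (q + 1)
  have hwd : w (w⁻¹ j) = j := Equiv.apply_symm_apply w j
  -- case p + 1 = i is impossible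
  rcases lt_or_eq_of_le (Nat.succ_le_of_lt hpi) with hpi' | hpi'
  · -- build the 2143 pattern
    apply hvex
    refine ⟨w⁻¹ (q + 1), p + 1, i, w⁻¹ j, ?_, hpi', hij2, ?_, ?_, ?_⟩
    · omega
    · omega
    · -- w a = q+1 < j = w d ; if q+1 = j then a = w⁻¹ j > i, contradiction
      rw [hwa, hwd]
      rcases lt_or_eq_of_le (Nat.succ_le_of_lt hqj) with h' | h'
      · exact h'
      · exfalso
        have h'' : q + 1 = j := by omega
        have : w⁻¹ (q + 1) = w⁻¹ j := by rw [h'']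
        omega
    · rw [hwd]; exact hij1
  · -- then w (p+1) = w i > j > q, contradicting hB
    exfalso
    have h'' : p + 1 = i := by omega
    rw [h''] at hB
    omega
end

section
/- The double Grothendieck polynomial satisfies G_w(x, y; β) = G_{w⁻¹}(y, x; β) for every permutation w ∈ S_n. -/
open MvPolynomial

/-- The number of inversions `ℓ(w)` of a permutation of `Fin n`. -/
def invNum {n : ℕ} (w : Equiv.Perm (Fin n)) : ℕ :=
  (Finset.univ.filter fun p : Fin n × Fin n => p.1 < p.2 ∧ w p.2 < w p.1).card

/-- The double Grothendieck polynomials live in `ℤ[β][x_1,…,x_n,y_1,…,y_n]`, with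
`x_i = X (Sum.inl i)`, `y_j = X (Sum.inr j)` and `β = C Polynomial.X`. -/
abbrev GrothRing (n : ℕ) := MvPolynomial (Fin n ⊕ Fin n) (Polynomial ℤ)


namespace DG
open Finset Equiv

variable {n : ℕ}

/-- total number of ordered pairs `p.1 < p.2`. -/
def NN (n : ℕ) : ℕ := (Finset.univ.filter fun p : Fin n × Fin n => p.1 < p.2).card


variable {n : ℕ}


lemma invNum_le (w : Perm (Fin n)) : invNum w ≤ NN n := by
  apply Finset.card_le_card
  intro p hp
  simp only [Finset.mem_filter] at *
  exact ⟨hp.1, hp.2.1⟩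

lemma invNum_rev : invNum (Fin.revPerm : Perm (Fin n)) = NN n := by
  unfold invNum NN
  congr 1
  apply Finset.filter_congr
  intro p _
  simp only [Fin.revPerm_apply, Fin.rev_lt_rev, and_iff_left_iff_imp]
  exact fun h => h

lemma swap_adj_lt {i j : Fin n} (hj : (j:ℕ) = (i:ℕ)+1) {a b : Fin n} (hab : a < b)
    (hne : ¬(a = i ∧ b = j)) : Equiv.swap i j a < Equiv.swap i j b := by
  have hne' : ¬((a:ℕ) = (i:ℕ) ∧ (b:ℕ) = (j:ℕ)) := by
    rintro ⟨h1, h2⟩; exact hne ⟨Fin.ext h1, Fin.ext h2⟩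
  have hab' : (a:ℕ) < (b:ℕ) := hab
  rw [Fin.lt_def]
  simp only [Equiv.swap_apply_def]
  split_ifs <;> simp_all [Fin.ext_iff] <;> omega

lemma invNum_mul_swap {w : Perm (Fin n)} {i j : Fin n} (hj : (j:ℕ) = (i:ℕ)+1)
    (h : w i < w j) : invNum (w * Equiv.swap i j) = invNum w + 1 := by
  classical
  set t := Equiv.swap i j with ht
  have hij : i < j := by rw [Fin.lt_def]; omega
  have key : (Finset.univ.filter fun p : Fin n × Fin n => p.1 < p.2 ∧ (w*t) p.2 < (w*t) p.1)
      = insert (i, j) ((Finset.univ.filter fun p : Fin n × Fin n => p.1 < p.2 ∧ w p.2 < w p.1).image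
          (fun p => (t p.1, t p.2))) := by
    ext q
    simp only [Finset.mem_insert, Finset.mem_image, Finset.mem_filter, Finset.mem_univ, true_and]
    simp only [Perm.mul_apply]
    constructor
    · rintro ⟨hq12, hq⟩
      rcases eq_or_ne q (i, j) with rfl | hqne
      · exact Or.inl rfl
      · refine Or.inr ⟨(t q.1, t q.2), ⟨?_, ?_⟩, ?_⟩
        · apply swap_adj_lt hj hq12
          rintro ⟨h1, h2⟩
          exact hqne (Prod.ext h1 h2)
        · simpa [ht, Equiv.swap_apply_self] using hq
        · simp [ht, Equiv.swap_apply_self]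
    · rintro (rfl | ⟨p, ⟨hp12, hp⟩, rfl⟩)
      · refine ⟨hij, ?_⟩
        simpa [ht] using h
      · constructor
        · apply swap_adj_lt hj hp12
          rintro ⟨h1, h2⟩
          rw [h1, h2] at hp
          exact absurd h (not_lt.mpr hp.le)
        · simpa [ht, Equiv.swap_apply_self] using hp
  unfold invNum
  rw [key, Finset.card_insert_of_notMem, Finset.card_image_of_injective]
  · intro p q hpq
    have h1 := congrArg Prod.fst hpq
    have h2 := congrArg Prod.snd hpq
    simp only at h1 h2
    exact Prod.ext (t.injective h1) (t.injective h2)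
  · intro hmem
    simp only [Finset.mem_image, Finset.mem_filter] at hmem
    obtain ⟨p, ⟨_, hp⟩, hpq⟩ := hmem
    have h1 : t p.1 = i := congrArg Prod.fst hpq
    have h2 : t p.2 = j := congrArg Prod.snd hpq
    have e1 : p.1 = j := by
      have := congrArg t h1; simpa [ht, Equiv.swap_apply_self] using this
    have e2 : p.2 = i := by
      have := congrArg t h2; simpa [ht, Equiv.swap_apply_self] using this
    rw [e1, e2] at hp
    exact absurd hp.1 (not_lt.mpr hij.le)

lemma invNum_inv (w : Perm (Fin n)) : invNum w⁻¹ = invNum w := by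
  unfold invNum
  apply Finset.card_bij' (fun p _ => (w⁻¹ p.2, w⁻¹ p.1)) (fun q _ => (w q.2, w q.1))
  · intro p hp
    simp only [Finset.mem_filter, Finset.mem_univ, true_and] at *
    exact ⟨hp.2, by simpa using hp.1⟩
  · intro q hq
    simp only [Finset.mem_filter, Finset.mem_univ, true_and] at *
    exact ⟨hq.2, by simpa using hq.1⟩
  · intro p _; simp
  · intro q _; simp

/-- If `w` has no ascent then `w = revPerm`. -/
lemma eq_rev_of_no_ascent {w : Perm (Fin n)}
    (h : ∀ k l : Fin n, (l:ℕ) = (k:ℕ)+1 → w l < w k) : w = Fin.revPerm := by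
  have anti : ∀ m : ℕ, ∀ a b : Fin n, (b:ℕ) = (a:ℕ) + m + 1 → w b < w a := by
    intro m
    induction m with
    | zero => intro a b hb; exact h a b (by omega)
    | succ m ih =>
        intro a b hb
        have hc : (a:ℕ) + m + 1 < n := by have := b.isLt; omega
        have h1 := ih a ⟨(a:ℕ)+m+1, hc⟩ rfl
        have h2 := h ⟨(a:ℕ)+m+1, hc⟩ b (by simp only []; omega)
        exact h2.trans h1
  have anti' : StrictAnti w := by
    intro a b hab
    have hv : (a:ℕ) < (b:ℕ) := hab
    exact anti ((b:ℕ) - (a:ℕ) - 1) a b (by omega)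
  have hmono : StrictMono (fun p : Fin n => w p.rev) := by
    intro a b hab
    exact anti' (Fin.rev_lt_rev.mpr hab)
  have hid : (fun p : Fin n => w p.rev) = id := by
    apply (@StrictMono.range_inj (Fin n) (Fin n) _ _ (inferInstance : WellFoundedLT (Fin n)) _ id hmono strictMono_id).1
    rw [Set.range_id]
    exact Function.Surjective.range_eq (w.surjective.comp Fin.rev_surjective)
  ext p
  have := congrFun hid p.rev
  simp only [Fin.rev_rev, id_eq] at this
  simp [this, Fin.revPerm_apply]

lemma ascent_of_invNum_succ {w : Perm (Fin n)} {i j : Fin n} (hj : (j:ℕ) = (i:ℕ)+1)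
    (hlen : invNum (w * Equiv.swap i j) = invNum w + 1) : w i < w j := by
  rcases lt_trichotomy (w i) (w j) with h | h | h
  · exact h
  · exfalso
    have := congrArg Fin.val (w.injective h)
    omega
  · exfalso
    have h2 : (w * Equiv.swap i j) i < (w * Equiv.swap i j) j := by
      simp only [Perm.mul_apply, Equiv.swap_apply_left, Equiv.swap_apply_right]
      exact h
    have h3 := invNum_mul_swap hj h2
    rw [mul_assoc, Equiv.swap_mul_self, mul_one] at h3
    omega

lemma exists_ascent {w : Perm (Fin n)} (hw : w ≠ Fin.revPerm) :
    ∃ k l : Fin n, (l:ℕ) = (k:ℕ)+1 ∧ w k < w l := by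
  by_contra hno
  push_neg at hno
  apply hw
  apply eq_rev_of_no_ascent
  intro k l hl
  have hne : w l ≠ w k := fun e => by
    have := congrArg Fin.val (w.injective e)
    omega
  exact lt_of_le_of_ne (hno k l hl) hne

lemma common_ascent {v : Perm (Fin n)} {i j k l : Fin n} (hj : (j:ℕ) = (i:ℕ)+1)
    (hl : (l:ℕ) = (k:ℕ)+1)
    (hlen : invNum (Equiv.swap i j * v) = invNum v + 1)
    (ha : (Equiv.swap i j * v) k < (Equiv.swap i j * v) l) : v k < v l := by
  have hkl : k ≠ l := fun e => by have := congrArg Fin.val e; omega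
  have hinv : v⁻¹ i < v⁻¹ j := by
    apply ascent_of_invNum_succ hj
    rw [show v⁻¹ * Equiv.swap i j = (Equiv.swap i j * v)⁻¹ by
      rw [mul_inv_rev, Equiv.swap_inv], invNum_inv, hlen, invNum_inv]
  by_contra hnot
  have hne : v l ≠ v k := fun e => hkl (v.injective e).symm
  have hBA : v l < v k := lt_of_le_of_ne (not_lt.mp hnot) hne
  have hspecial : ¬ (v k = j ∧ v l = i) := by
    rintro ⟨h1, h2⟩
    have e1 : v⁻¹ j = k := by rw [← h1]; exact v.symm_apply_apply k
    have e2 : v⁻¹ i = l := by rw [← h2]; exact v.symm_apply_apply l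
    rw [e1, e2] at hinv
    have : (l:ℕ) < (k:ℕ) := hinv
    omega
  have ha' : ((Equiv.swap i j) (v k) : ℕ) < ((Equiv.swap i j) (v l) : ℕ) := by
    simpa only [Perm.mul_apply, Fin.lt_def] using ha
  have hBA' : (v l : ℕ) < (v k : ℕ) := hBA
  simp only [Equiv.swap_apply_def] at ha'
  split_ifs at ha' <;>
    first
      | exact hspecial ⟨by assumption, by assumption⟩
      | omega
      | (simp_all only [Fin.ext_iff, Fin.ne_iff_vne]; omega)
      | simp_all only [Fin.ext_iff, Fin.ne_iff_vne]

lemma eq_rev_of_invNum {w : Perm (Fin n)} (h : NN n ≤ invNum w) : w = Fin.revPerm := by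
  by_contra hw
  obtain ⟨k, l, hl, ha⟩ := exists_ascent hw
  have h1 := invNum_mul_swap hl ha
  have h2 := invNum_le (w * Equiv.swap k l)
  omega

lemma swap_mul_rev {i j : Fin n} (hj : (j:ℕ) = (i:ℕ)+1) :
    Equiv.swap i j * Fin.revPerm = Fin.revPerm * Equiv.swap j.rev i.rev := by
  ext p
  simp only [Equiv.Perm.mul_apply, Fin.revPerm_apply]
  rcases eq_or_ne p j.rev with h1 | h1
  · rw [h1]
    simp [Equiv.swap_apply_left, Equiv.swap_apply_right, Fin.rev_rev]
  · rcases eq_or_ne p i.rev with h2 | h2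
    · rw [h2]
      simp [Equiv.swap_apply_left, Equiv.swap_apply_right, Fin.rev_rev]
    · rw [Equiv.swap_apply_of_ne_of_ne h1 h2]
      have e1 : p.rev ≠ i := fun e => h2 (by
        have := congrArg Fin.rev e
        rwa [Fin.rev_rev] at this)
      have e2 : p.rev ≠ j := fun e => h1 (by
        have := congrArg Fin.rev e
        rwa [Fin.rev_rev] at this)
      rw [Equiv.swap_apply_of_ne_of_ne e1 e2]

open Equiv
variable {n : ℕ}

noncomputable def bb : GrothRing n := C Polynomial.X
noncomputable def xv (i : Fin n) : GrothRing n := X (Sum.inl i)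
noncomputable def yv (i : Fin n) : GrothRing n := X (Sum.inr i)
noncomputable def sX (i j : Fin n) (f : GrothRing n) : GrothRing n :=
  rename (Equiv.sumCongr (Equiv.swap i j) (Equiv.refl (Fin n))) f
noncomputable def sY (i j : Fin n) (f : GrothRing n) : GrothRing n :=
  rename (Equiv.sumCongr (Equiv.refl (Fin n)) (Equiv.swap i j)) f
noncomputable def Rx (i j : Fin n) (f : GrothRing n) : GrothRing n :=
  (1 + bb * xv j) * f - (1 + bb * xv i) * sX i j f
noncomputable def Ry (i j : Fin n) (f : GrothRing n) : GrothRing n :=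
  (1 + bb * yv j) * f - (1 + bb * yv i) * sY i j f

lemma sX_X (i j a : Fin n) : sX i j (xv a) = xv (Equiv.swap i j a) := by
  simp only [sX, xv]; rw [rename_X]; rfl

lemma sX_Y (i j a : Fin n) : sX i j (yv a) = yv a := by
  simp only [sX, yv]; rw [rename_X]; rfl

lemma sX_C (i j : Fin n) (c : Polynomial ℤ) : sX i j (C c) = C c := by
  simp [sX, rename_C]

lemma sY_Y (i j a : Fin n) : sY i j (yv a) = yv (Equiv.swap i j a) := by
  simp only [sY, yv]; rw [rename_X]; rfl

lemma sY_X (i j a : Fin n) : sY i j (xv a) = xv a := by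
  simp only [sY, xv]; rw [rename_X]; rfl

lemma sY_C (i j : Fin n) (c : Polynomial ℤ) : sY i j (C c) = C c := by
  simp [sY, rename_C]


lemma sX_bb (i j : Fin n) : sX i j (bb : GrothRing n) = bb := sX_C i j Polynomial.X

lemma sY_bb (i j : Fin n) : sY i j (bb : GrothRing n) = bb := sY_C i j Polynomial.X

lemma sX_add (i j : Fin n) (f g : GrothRing n) : sX i j (f + g) = sX i j f + sX i j g :=
  map_add _ f g

lemma sX_mul (i j : Fin n) (f g : GrothRing n) : sX i j (f * g) = sX i j f * sX i j g :=
  map_mul _ f g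

lemma sX_sub (i j : Fin n) (f g : GrothRing n) : sX i j (f - g) = sX i j f - sX i j g :=
  map_sub _ f g

lemma sX_one (i j : Fin n) : sX i j (1 : GrothRing n) = 1 := map_one _

lemma sY_add (i j : Fin n) (f g : GrothRing n) : sY i j (f + g) = sY i j f + sY i j g :=
  map_add _ f g

lemma sY_mul (i j : Fin n) (f g : GrothRing n) : sY i j (f * g) = sY i j f * sY i j g :=
  map_mul _ f g

lemma sY_sub (i j : Fin n) (f g : GrothRing n) : sY i j (f - g) = sY i j f - sY i j g :=
  map_sub _ f g

lemma sY_one (i j : Fin n) : sY i j (1 : GrothRing n) = 1 := map_one _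

lemma sXY_comm (i j k l : Fin n) (f : GrothRing n) :
    sX i j (sY k l f) = sY k l (sX i j f) := by
  unfold sX sY
  rw [rename_rename, rename_rename]
  have he : ⇑(Equiv.sumCongr (Equiv.swap i j) (Equiv.refl (Fin n))) ∘
      ⇑(Equiv.sumCongr (Equiv.refl (Fin n)) (Equiv.swap k l)) =
      ⇑(Equiv.sumCongr (Equiv.refl (Fin n)) (Equiv.swap k l)) ∘
      ⇑(Equiv.sumCongr (Equiv.swap i j) (Equiv.refl (Fin n))) := by
    funext x; cases x <;> rfl
  rw [he]

lemma Rx_Ry_comm (i j k l : Fin n) (f : GrothRing n) :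
    Rx i j (Ry k l f) = Ry k l (Rx i j f) := by
  unfold Rx Ry
  simp only [sX_sub, sX_mul, sX_add, sX_one, sY_sub, sY_mul, sY_add, sY_one,
    sX_bb, sY_bb, sX_Y, sY_X, sXY_comm]
  ring

lemma Rx_mul_yfree (i j a c : Fin n) (f : GrothRing n) :
    Rx i j ((yv a - yv c) * f) = (yv a - yv c) * Rx i j f := by
  unfold Rx
  simp only [sX_sub, sX_mul, sX_Y]
  ring

lemma Ry_mul_xfree (i j a c : Fin n) (f : GrothRing n) :
    Ry i j ((xv a - xv c) * f) = (xv a - xv c) * Ry i j f := by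
  unfold Ry
  simp only [sY_sub, sY_mul, sY_X]
  ring

lemma rsig_X (a : Fin n) :
    rename (⇑(Equiv.sumComm (Fin n) (Fin n))) (xv a) = yv a := by
  simp only [xv, yv]; rw [rename_X]; rfl

lemma rsig_Y (a : Fin n) :
    rename (⇑(Equiv.sumComm (Fin n) (Fin n))) (yv a) = xv a := by
  simp only [xv, yv]; rw [rename_X]; rfl

lemma rsig_sY (i j : Fin n) (f : GrothRing n) :
    rename (⇑(Equiv.sumComm (Fin n) (Fin n))) (sY i j f) =
      sX i j (rename (⇑(Equiv.sumComm (Fin n) (Fin n))) f) := by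
  unfold sX sY
  rw [rename_rename, rename_rename]
  have he : ⇑(Equiv.sumComm (Fin n) (Fin n)) ∘
      ⇑(Equiv.sumCongr (Equiv.refl (Fin n)) (Equiv.swap i j)) =
      ⇑(Equiv.sumCongr (Equiv.swap i j) (Equiv.refl (Fin n))) ∘
      ⇑(Equiv.sumComm (Fin n) (Fin n)) := by
    funext x; cases x <;> rfl
  rw [he]

lemma rsig_Ry (i j : Fin n) (f : GrothRing n) :
    rename (⇑(Equiv.sumComm (Fin n) (Fin n))) (Ry i j f) =
      Rx i j (rename (⇑(Equiv.sumComm (Fin n) (Fin n))) f) := by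
  unfold Ry Rx bb
  simp only [map_sub, map_mul, map_add, map_one, rename_C, rsig_Y, rsig_sY]

lemma xv_sub_ne (k l : Fin n) (hkl : k ≠ l) : (xv k - xv l : GrothRing n) ≠ 0 := by
  apply sub_ne_zero.mpr
  intro e
  exact hkl (Sum.inl.inj (X_injective e))

lemma cancelx {k l : Fin n} (hkl : k ≠ l) {f g : GrothRing n}
    (h : (xv k - xv l) * f = (xv k - xv l) * g) : f = g :=
  mul_left_cancel₀ (xv_sub_ne k l hkl) h

lemma F_ne_zero (a c : Fin n) : (xv a + yv c + bb * xv a * yv c : GrothRing n) ≠ 0 := by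
  intro h
  have := congrArg (eval (fun v : Fin n ⊕ Fin n =>
    match v with
    | Sum.inl d => if d = a then (1 : Polynomial ℤ) else 0
    | Sum.inr _ => 0)) h
  simp [xv, yv, bb] at this

/-- the index set of the base product -/
def SS (n : ℕ) : Finset (Fin n × Fin n) :=
  Finset.univ.filter (fun p : Fin n × Fin n => (p.1 : ℕ) + (p.2 : ℕ) + 2 ≤ n)

noncomputable def FF (p : Fin n × Fin n) : GrothRing n :=
  xv p.1 + yv p.2 + bb * xv p.1 * yv p.2

noncomputable def G0 (n : ℕ) : GrothRing n := ∏ p ∈ SS n, FF p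

lemma mem_SS {p : Fin n × Fin n} : p ∈ SS n ↔ (p.1 : ℕ) + (p.2 : ℕ) + 2 ≤ n := by
  simp [SS]

/-- image of SS under swapping x-coordinates k=rev j, l=rev i -/
lemma image_SS_x {i j : Fin n} (hj : (j:ℕ) = (i:ℕ)+1) :
    (SS n).image (fun p : Fin n × Fin n => ((Equiv.swap j.rev i.rev) p.1, p.2)) =
      insert ((i.rev, i) : Fin n × Fin n) ((SS n).erase (j.rev, i)) := by
  have hin : (i:ℕ) + 2 ≤ n := by have := j.isLt; omega
  have hk : (j.rev : ℕ) = n - (i:ℕ) - 2 := by rw [Fin.val_rev]; omega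
  have hl : (i.rev : ℕ) = n - (i:ℕ) - 1 := by rw [Fin.val_rev]; omega
  have key : ∀ q : Fin n × Fin n,
      q ∈ (SS n).image (fun p : Fin n × Fin n => ((Equiv.swap j.rev i.rev) p.1, p.2)) ↔
        ((Equiv.swap j.rev i.rev) q.1, q.2) ∈ SS n := by
    intro q
    constructor
    · intro hq
      obtain ⟨p, hp, rfl⟩ := Finset.mem_image.mp hq
      simpa [Equiv.swap_apply_self] using hp
    · intro h
      exact Finset.mem_image.mpr ⟨_, h, by simp [Equiv.swap_apply_self]⟩
  ext q
  rw [key]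
  obtain ⟨q1, q2⟩ := q
  simp only [mem_SS, Finset.mem_insert, Finset.mem_erase, Prod.mk.injEq, ne_eq]
  rcases eq_or_ne q1 j.rev with h1 | h1
  · rw [h1, Equiv.swap_apply_left]
    simp only [Fin.ext_iff, true_and, and_true] at *
    omega
  · rcases eq_or_ne q1 i.rev with h3 | h3
    · rw [h3, Equiv.swap_apply_right]
      simp only [Fin.ext_iff, true_and, and_true] at *
      omega
    · rw [Equiv.swap_apply_of_ne_of_ne h1 h3]
      simp only [Fin.ext_iff, true_and, and_true] at *
      omega

/-- image of SS under swapping y-coordinates i, j -/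
lemma image_SS_y {i j : Fin n} (hj : (j:ℕ) = (i:ℕ)+1) :
    (SS n).image (fun p : Fin n × Fin n => (p.1, (Equiv.swap i j) p.2)) =
      insert ((j.rev, j) : Fin n × Fin n) ((SS n).erase (j.rev, i)) := by
  have hin : (i:ℕ) + 2 ≤ n := by have := j.isLt; omega
  have hk : (j.rev : ℕ) = n - (i:ℕ) - 2 := by rw [Fin.val_rev]; omega
  have key : ∀ q : Fin n × Fin n,
      q ∈ (SS n).image (fun p : Fin n × Fin n => (p.1, (Equiv.swap i j) p.2)) ↔
        (q.1, (Equiv.swap i j) q.2) ∈ SS n := by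
    intro q
    constructor
    · intro hq
      obtain ⟨p, hp, rfl⟩ := Finset.mem_image.mp hq
      simpa [Equiv.swap_apply_self] using hp
    · intro h
      exact Finset.mem_image.mpr ⟨_, h, by simp [Equiv.swap_apply_self]⟩
  ext q
  rw [key]
  obtain ⟨q1, q2⟩ := q
  simp only [mem_SS, Finset.mem_insert, Finset.mem_erase, Prod.mk.injEq, ne_eq]
  rcases eq_or_ne q2 i with h1 | h1
  · rw [h1, Equiv.swap_apply_left]
    simp only [Fin.ext_iff, true_and, and_true] at *
    omega
  · rcases eq_or_ne q2 j with h3 | h3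
    · rw [h3, Equiv.swap_apply_right]
      simp only [Fin.ext_iff, true_and, and_true] at *
      omega
    · rw [Equiv.swap_apply_of_ne_of_ne h1 h3]
      simp only [Fin.ext_iff, true_and, and_true] at *
      omega


lemma FF_ne_zero (p : Fin n × Fin n) : (FF p : GrothRing n) ≠ 0 := F_ne_zero p.1 p.2

lemma prodX {i j : Fin n} (hj : (j:ℕ) = (i:ℕ)+1) :
    sX j.rev i.rev (G0 n) * FF ((j.rev, i) : Fin n × Fin n)
      = G0 n * FF ((i.rev, i) : Fin n × Fin n) := by
  have hji : (j : ℕ) < n := j.isLt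
  have hmemki : ((j.rev, i) : Fin n × Fin n) ∈ SS n := by
    rw [mem_SS]
    show (j.rev : ℕ) + (i : ℕ) + 2 ≤ n
    rw [Fin.val_rev]; omega
  have hnm : ((i.rev, i) : Fin n × Fin n) ∉ (SS n).erase (j.rev, i) := by
    intro hmem
    have h := (Finset.mem_erase.mp hmem).2
    rw [mem_SS] at h
    have h2 : (i.rev : ℕ) + (i : ℕ) + 2 ≤ n := h
    rw [Fin.val_rev] at h2; omega
  have h1 : sX j.rev i.rev (G0 n)
      = ∏ p ∈ SS n, FF ((Equiv.swap j.rev i.rev) p.1, p.2) := by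
    unfold G0 sX
    rw [map_prod]
    refine Finset.prod_congr rfl fun p _ => ?_
    unfold FF xv yv bb
    simp only [map_add, map_mul, rename_X, rename_C]
    rfl
  have h2 : ∏ q ∈ (SS n).image (fun p : Fin n × Fin n => ((Equiv.swap j.rev i.rev) p.1, p.2)),
      FF q = ∏ p ∈ SS n, FF ((Equiv.swap j.rev i.rev) p.1, p.2) := by
    apply Finset.prod_image
    intro p _ q _ h
    have e1 := congrArg Prod.fst h
    have e2 := congrArg Prod.snd h
    simp only at e1 e2
    exact Prod.ext ((Equiv.swap j.rev i.rev).injective e1) e2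
  have hG0 : G0 n = FF ((j.rev, i) : Fin n × Fin n) * ∏ p ∈ (SS n).erase (j.rev, i), FF p :=
    (Finset.mul_prod_erase _ _ hmemki).symm
  rw [h1, ← h2, image_SS_x hj, Finset.prod_insert hnm, hG0]
  ring

lemma prodY {i j : Fin n} (hj : (j:ℕ) = (i:ℕ)+1) :
    sY i j (G0 n) * FF ((j.rev, i) : Fin n × Fin n)
      = G0 n * FF ((j.rev, j) : Fin n × Fin n) := by
  have hji : (j : ℕ) < n := j.isLt
  have hmemki : ((j.rev, i) : Fin n × Fin n) ∈ SS n := by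
    rw [mem_SS]
    show (j.rev : ℕ) + (i : ℕ) + 2 ≤ n
    rw [Fin.val_rev]; omega
  have hnm : ((j.rev, j) : Fin n × Fin n) ∉ (SS n).erase (j.rev, i) := by
    intro hmem
    have h := (Finset.mem_erase.mp hmem).2
    rw [mem_SS] at h
    have h2 : (j.rev : ℕ) + (j : ℕ) + 2 ≤ n := h
    rw [Fin.val_rev] at h2; omega
  have h1 : sY i j (G0 n) = ∏ p ∈ SS n, FF (p.1, (Equiv.swap i j) p.2) := by
    unfold G0 sY
    rw [map_prod]
    refine Finset.prod_congr rfl fun p _ => ?_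
    unfold FF xv yv bb
    simp only [map_add, map_mul, rename_X, rename_C]
    rfl
  have h2 : ∏ q ∈ (SS n).image (fun p : Fin n × Fin n => (p.1, (Equiv.swap i j) p.2)),
      FF q = ∏ p ∈ SS n, FF (p.1, (Equiv.swap i j) p.2) := by
    apply Finset.prod_image
    intro p _ q _ h
    have e1 := congrArg Prod.fst h
    have e2 := congrArg Prod.snd h
    simp only at e1 e2
    exact Prod.ext e1 ((Equiv.swap i j).injective e2)
  have hG0 : G0 n = FF ((j.rev, i) : Fin n × Fin n) * ∏ p ∈ (SS n).erase (j.rev, i), FF p :=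
    (Finset.mul_prod_erase _ _ hmemki).symm
  rw [h1, ← h2, image_SS_y hj, Finset.prod_insert hnm, hG0]
  ring

lemma baseId {i j : Fin n} (hj : (j:ℕ) = (i:ℕ)+1) :
    (xv j.rev - xv i.rev) * Ry i j (G0 n) = (yv i - yv j) * Rx j.rev i.rev (G0 n) := by
  have h1 := prodX hj
  have h2 := prodY hj
  apply mul_right_cancel₀ (FF_ne_zero ((j.rev, i) : Fin n × Fin n))
  unfold Rx Ry
  unfold FF at h1 h2 ⊢
  linear_combination ((yv i - yv j) * (1 + bb * xv j.rev)) * h1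
    - ((xv j.rev - xv i.rev) * (1 + bb * yv i)) * h2

lemma rsig_G0 : rename (⇑(Equiv.sumComm (Fin n) (Fin n))) (G0 n) = G0 n := by
  unfold G0
  rw [map_prod]
  have h1 : ∀ p ∈ SS n,
      rename (⇑(Equiv.sumComm (Fin n) (Fin n))) (FF p) = FF (p.2, p.1) := by
    intro p _
    unfold FF bb
    simp only [map_add, map_mul, rsig_X, rsig_Y, rename_C]
    ring
  rw [Finset.prod_congr rfl h1]
  have hswap : (SS n).image (fun p : Fin n × Fin n => (p.2, p.1)) = SS n := by
    ext q
    constructor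
    · intro hq
      obtain ⟨p, hp, rfl⟩ := Finset.mem_image.mp hq
      rw [mem_SS] at hp ⊢
      show (p.2 : ℕ) + (p.1 : ℕ) + 2 ≤ n
      omega
    · intro hq
      refine Finset.mem_image.mpr ⟨(q.2, q.1), ?_, rfl⟩
      rw [mem_SS] at hq ⊢
      show (q.2 : ℕ) + (q.1 : ℕ) + 2 ≤ n
      omega
  have h2 : ∏ q ∈ (SS n).image (fun p : Fin n × Fin n => (p.2, p.1)), FF q
      = ∏ p ∈ SS n, FF (p.2, p.1) := by
    apply Finset.prod_image
    intro p _ q _ h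
    have e1 := congrArg Prod.fst h
    have e2 := congrArg Prod.snd h
    simp only at e1 e2
    exact Prod.ext e2 e1
  rw [← h2, hswap]

end DG

/-- For any family `G` of polynomials indexed by permutations satisfying the defining
recursion of the double Grothendieck polynomials — the base case
`G_{w₀} = ∏_{i+j ≤ n} (x_i + y_j + β x_i y_j)` and `G_w = 𝔡_i G_{w s_i}` whenever
`ℓ(w s_i) = ℓ(w) + 1` (with `𝔡_i` encoded by its defining equation) — one has the
symmetry `G_w(x, y; β) = G_{w⁻¹}(y, x; β)` for every permutation `w`. -/
theorem double_grothendieck_symmetry (n : ℕ) (G : Equiv.Perm (Fin n) → GrothRing n)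
    (hbase : G (Fin.revPerm : Equiv.Perm (Fin n)) =
      ∏ p ∈ Finset.univ.filter (fun p : Fin n × Fin n => (p.1 : ℕ) + (p.2 : ℕ) + 2 ≤ n),
        (X (Sum.inl p.1) + X (Sum.inr p.2) +
          C Polynomial.X * X (Sum.inl p.1) * X (Sum.inr p.2)))
    (hrec : ∀ (w : Equiv.Perm (Fin n)) (i j : Fin n), (j : ℕ) = (i : ℕ) + 1 →
      invNum (w * Equiv.swap i j) = invNum w + 1 →
      (X (Sum.inl i) - X (Sum.inl j)) * G w =
        (1 + C Polynomial.X * X (Sum.inl j)) * G (w * Equiv.swap i j) -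
          (1 + C Polynomial.X * X (Sum.inl i)) *
            rename (Equiv.sumCongr (Equiv.swap i j) (Equiv.refl (Fin n)))
              (G (w * Equiv.swap i j))) :
    ∀ w : Equiv.Perm (Fin n), G w = rename (Equiv.sumComm (Fin n) (Fin n)) (G w⁻¹) := by
  classical
  have hrec' : ∀ (w : Equiv.Perm (Fin n)) (i j : Fin n), (j : ℕ) = (i : ℕ) + 1 →
      invNum (w * Equiv.swap i j) = invNum w + 1 →
      (DG.xv i - DG.xv j) * G w = DG.Rx i j (G (w * Equiv.swap i j)) := hrec
  have hbase' : G Fin.revPerm = DG.G0 n := hbase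
  have L : ∀ d : ℕ, ∀ (v : Equiv.Perm (Fin n)) (i j : Fin n), (j : ℕ) = (i : ℕ) + 1 →
      DG.NN n ≤ invNum v + d →
      invNum (Equiv.swap i j * v) = invNum v + 1 →
      (DG.yv i - DG.yv j) * G v = DG.Ry i j (G (Equiv.swap i j * v)) := by
    intro d
    induction d with
    | zero =>
        intro v i j hj hd hlen
        exfalso
        have h1 := DG.invNum_le (Equiv.swap i j * v)
        omega
    | succ d ih =>
        intro v i j hj hd hlen
        by_cases hrev : Equiv.swap i j * v = Fin.revPerm
        · have hv : v = Equiv.swap i j * Fin.revPerm := by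
            have h2 := congrArg (fun u => Equiv.swap i j * u) hrev
            rw [← mul_assoc, Equiv.swap_mul_self, one_mul] at h2
            exact h2
          have hl : (i.rev : ℕ) = (j.rev : ℕ) + 1 := by
            have := j.isLt
            rw [Fin.val_rev, Fin.val_rev]
            omega
          have hkl : j.rev ≠ i.rev := fun e => by
            have := congrArg Fin.val e
            omega
          have hvt : v * Equiv.swap j.rev i.rev = Fin.revPerm := by
            rw [hv, mul_assoc, ← DG.swap_mul_rev hj, ← mul_assoc, Equiv.swap_mul_self,
              one_mul]
          have h1 : invNum (v * Equiv.swap j.rev i.rev) = invNum v + 1 := by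
            rw [hvt, ← hrev]
            exact hlen
          have E := hrec' v j.rev i.rev hl h1
          rw [hvt, hbase'] at E
          rw [hrev, hbase']
          apply DG.cancelx hkl
          calc (DG.xv j.rev - DG.xv i.rev) * ((DG.yv i - DG.yv j) * G v)
              = (DG.yv i - DG.yv j) * ((DG.xv j.rev - DG.xv i.rev) * G v) := by ring
            _ = (DG.yv i - DG.yv j) * DG.Rx j.rev i.rev (DG.G0 n) := by rw [E]
            _ = (DG.xv j.rev - DG.xv i.rev) * DG.Ry i j (DG.G0 n) := (DG.baseId hj).symm
        · obtain ⟨k, l, hl, ha⟩ := DG.exists_ascent hrev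
          have hkl : k ≠ l := fun e => by
            have := congrArg Fin.val e
            omega
          have hva : v k < v l := DG.common_ascent hj hl hlen ha
          have h1 : invNum (v * Equiv.swap k l) = invNum v + 1 := DG.invNum_mul_swap hl hva
          have h2 : invNum (Equiv.swap i j * v * Equiv.swap k l)
              = invNum (Equiv.swap i j * v) + 1 := DG.invNum_mul_swap hl ha
          have E1 := hrec' v k l hl h1
          have E2 := hrec' (Equiv.swap i j * v) k l hl h2
          have E3 : (DG.yv i - DG.yv j) * G (v * Equiv.swap k l)
              = DG.Ry i j (G (Equiv.swap i j * v * Equiv.swap k l)) := by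
            rw [mul_assoc]
            apply ih (v * Equiv.swap k l) i j hj (by omega)
            rw [← mul_assoc, h2, hlen, h1]
          apply DG.cancelx hkl
          calc (DG.xv k - DG.xv l) * ((DG.yv i - DG.yv j) * G v)
              = (DG.yv i - DG.yv j) * ((DG.xv k - DG.xv l) * G v) := by ring
            _ = (DG.yv i - DG.yv j) * DG.Rx k l (G (v * Equiv.swap k l)) := by rw [E1]
            _ = DG.Rx k l ((DG.yv i - DG.yv j) * G (v * Equiv.swap k l)) :=
                (DG.Rx_mul_yfree k l i j _).symm
            _ = DG.Rx k l (DG.Ry i j (G (Equiv.swap i j * v * Equiv.swap k l))) := by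
                rw [E3]
            _ = DG.Ry i j (DG.Rx k l (G (Equiv.swap i j * v * Equiv.swap k l))) := by
                rw [DG.Rx_Ry_comm]
            _ = DG.Ry i j ((DG.xv k - DG.xv l) * G (Equiv.swap i j * v)) := by rw [E2]
            _ = (DG.xv k - DG.xv l) * DG.Ry i j (G (Equiv.swap i j * v)) :=
                DG.Ry_mul_xfree i j k l _
  have U : ∀ d : ℕ, ∀ w : Equiv.Perm (Fin n), DG.NN n ≤ invNum w + d →
      G w = rename (⇑(Equiv.sumComm (Fin n) (Fin n))) (G w⁻¹) := by
    intro d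
    induction d with
    | zero =>
        intro w hw
        have hrev : w = Fin.revPerm := DG.eq_rev_of_invNum (by omega)
        subst hrev
        rw [show (Fin.revPerm : Equiv.Perm (Fin n))⁻¹ = Fin.revPerm from rfl, hbase',
          DG.rsig_G0]
    | succ d ih =>
        intro w hw
        by_cases hrev : w = Fin.revPerm
        · subst hrev
          rw [show (Fin.revPerm : Equiv.Perm (Fin n))⁻¹ = Fin.revPerm from rfl, hbase',
            DG.rsig_G0]
        · obtain ⟨k, l, hl, ha⟩ := DG.exists_ascent hrev
          have hkl : k ≠ l := fun e => by
            have := congrArg Fin.val e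
            omega
          have h1 : invNum (w * Equiv.swap k l) = invNum w + 1 := DG.invNum_mul_swap hl ha
          have hG := hrec' w k l hl h1
          have e2 : Equiv.swap k l * w⁻¹ = (w * Equiv.swap k l)⁻¹ := by
            rw [mul_inv_rev, Equiv.swap_inv]
          have hlen' : invNum (Equiv.swap k l * w⁻¹) = invNum w⁻¹ + 1 := by
            rw [e2, DG.invNum_inv, DG.invNum_inv, h1]
          have hL := L (DG.NN n) w⁻¹ k l hl (Nat.le_add_left _ _) hlen'
          have hH := congrArg (rename (⇑(Equiv.sumComm (Fin n) (Fin n)))) hL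
          rw [map_mul, map_sub, DG.rsig_Y, DG.rsig_Y, DG.rsig_Ry, e2] at hH
          have hIH := ih (w * Equiv.swap k l) (by omega)
          apply DG.cancelx hkl
          rw [hG, hIH]
          exact hH.symm
  intro w
  exact U (DG.NN n) w (Nat.le_add_left _ _)
end

section
/- The double Grothendieck polynomials are well-defined: for any reduced word of w, the recursion G_w = 𝔡_i G_{w s_i} yields the same polynomial, because the operators 𝔡_i satisfy the braid relations 𝔡_i 𝔡_{i+1} 𝔡_i = 𝔡_{i+1} 𝔡_i 𝔡_{i+1} and 𝔡_i 𝔡_j = 𝔡_j 𝔡_i for |i-j| > 1. -/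
open MvPolynomial

/-- `IsKDD i f g` says `g = 𝔡_i f`, where
`𝔡_i f := ((1+βx_{i+1})f - (1+βx_i) s_i f)/(x_i - x_{i+1})` over `ℤ[β][x_0, x_1, …]`
(with `β = C Polynomial.X`), encoded by the defining equation. -/
def IsKDD (i : ℕ) (f g : MvPolynomial ℕ (Polynomial ℤ)) : Prop :=
  (X i - X (i + 1)) * g =
    (1 + C Polynomial.X * X (i + 1)) * f -
      (1 + C Polynomial.X * X i) * rename (Equiv.swap i (i + 1)) f

private lemma rename_swap_swap (a b : ℕ) (p : MvPolynomial ℕ (Polynomial ℤ)) :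
    rename (Equiv.swap a b) (rename (Equiv.swap a b) p) = p := by
  rw [rename_rename]
  have h : (⇑(Equiv.swap a b) ∘ ⇑(Equiv.swap a b)) = id := by
    funext n; simp [Equiv.swap_apply_self]
  rw [h, rename_id, AlgHom.id_apply]

private lemma rename_braid (i : ℕ) (p : MvPolynomial ℕ (Polynomial ℤ)) :
    rename (Equiv.swap (i+1) (i+2)) (rename (Equiv.swap i (i+1)) (rename (Equiv.swap (i+1) (i+2)) p)) =
    rename (Equiv.swap i (i+1)) (rename (Equiv.swap (i+1) (i+2)) (rename (Equiv.swap i (i+1)) p)) := by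
  rw [rename_rename, rename_rename, rename_rename, rename_rename]
  have h : ((⇑(Equiv.swap (i + 1) (i + 2)) ∘ ⇑(Equiv.swap i (i + 1))) ∘ ⇑(Equiv.swap (i + 1) (i + 2))) =
      ((⇑(Equiv.swap i (i + 1)) ∘ ⇑(Equiv.swap (i + 1) (i + 2))) ∘ ⇑(Equiv.swap i (i + 1))) := by
    funext n
    simp only [Function.comp_apply, Equiv.swap_apply_def]
    split_ifs <;> omega
  rw [h]

private lemma rename_comm_swaps (i j : ℕ) (hij : i + 1 < j ∨ j + 1 < i)
    (p : MvPolynomial ℕ (Polynomial ℤ)) :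
    rename (Equiv.swap i (i+1)) (rename (Equiv.swap j (j+1)) p) =
    rename (Equiv.swap j (j+1)) (rename (Equiv.swap i (i+1)) p) := by
  rw [rename_rename, rename_rename]
  have h : (⇑(Equiv.swap i (i + 1)) ∘ ⇑(Equiv.swap j (j + 1))) =
      (⇑(Equiv.swap j (j + 1)) ∘ ⇑(Equiv.swap i (i + 1))) := by
    funext n
    simp only [Function.comp_apply, Equiv.swap_apply_def]
    split_ifs <;> omega
  rw [h]

private lemma Xsub_ne (a b : ℕ) (h : a ≠ b) :
    (X a - X b : MvPolynomial ℕ (Polynomial ℤ)) ≠ 0 := by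
  intro hc
  have h2 : b ≠ a := h.symm
  have := congrArg (eval fun n => if n = a then (1:Polynomial ℤ) else 0) hc
  simp [h, h2] at this

/-- The K-theoretic divided difference operators satisfy the braid relations
`𝔡_i 𝔡_{i+1} 𝔡_i = 𝔡_{i+1} 𝔡_i 𝔡_{i+1}` and `𝔡_i 𝔡_j = 𝔡_j 𝔡_i` for `|i-j| > 1`; hence
the recursion `G_w = 𝔡_i G_{w s_i}` yields the same polynomial for any reduced word. -/
theorem ktheoretic_divided_difference_braid_and_comm :
    (∀ (i : ℕ) (f a₁ a₂ a₃ b₁ b₂ b₃ : MvPolynomial ℕ (Polynomial ℤ)),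
      IsKDD i f a₁ → IsKDD (i + 1) a₁ a₂ → IsKDD i a₂ a₃ →
      IsKDD (i + 1) f b₁ → IsKDD i b₁ b₂ → IsKDD (i + 1) b₂ b₃ →
      a₃ = b₃) ∧
    (∀ (i j : ℕ), (i + 1 < j ∨ j + 1 < i) →
      ∀ (f a₁ a₂ b₁ b₂ : MvPolynomial ℕ (Polynomial ℤ)),
      IsKDD i f a₁ → IsKDD j a₁ a₂ →
      IsKDD j f b₁ → IsKDD i b₁ b₂ →
      a₂ = b₂) := by
  constructor
  · intro i f a₁ a₂ a₃ b₁ b₂ b₃ ha1 ha2 ha3 hb1 hb2 hb3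
    unfold IsKDD at ha1 ha2 ha3 hb1 hb2 hb3
    have s1l : (Equiv.swap i (i+1)) i = i+1 := Equiv.swap_apply_left _ _
    have s1r : (Equiv.swap i (i+1)) (i+1) = i := Equiv.swap_apply_right _ _
    have s1f : (Equiv.swap i (i+1)) (i+2) = i+2 :=
      Equiv.swap_apply_of_ne_of_ne (by omega) (by omega)
    have s2l : (Equiv.swap (i+1) (i+2)) (i+1) = i+2 := Equiv.swap_apply_left _ _
    have s2r : (Equiv.swap (i+1) (i+2)) (i+2) = i+1 := Equiv.swap_apply_right _ _
    have s2f : (Equiv.swap (i+1) (i+2)) i = i :=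
      Equiv.swap_apply_of_ne_of_ne (by omega) (by omega)
    -- renamed versions of the defining equations
    have ha1r := congrArg (rename (Equiv.swap (i+1) (i+2))) ha1
    have ha1r1 := congrArg (rename (Equiv.swap i (i+1))) ha1
    have ha2r := congrArg (rename (Equiv.swap i (i+1))) ha2
    have hb1r := congrArg (rename (Equiv.swap i (i+1))) hb1
    have hb1r2 := congrArg (rename (Equiv.swap (i+1) (i+2))) hb1
    have hb2r := congrArg (rename (Equiv.swap (i+1) (i+2))) hb2
    simp only [map_mul, map_sub, map_add, map_one, rename_X, rename_C, s1l, s1r, s1f,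
      s2l, s2r, s2f, rename_swap_swap] at ha1r ha1r1 ha2r hb1r hb1r2 hb2r
    have ha1r21 := congrArg (rename (Equiv.swap i (i+1))) ha1r
    have hb1r12 := congrArg (rename (Equiv.swap (i+1) (i+2))) hb1r
    simp only [map_mul, map_sub, map_add, map_one, rename_X, rename_C, s1l, s1r, s1f,
      s2l, s2r, s2f, rename_swap_swap] at ha1r21 hb1r12
    rw [rename_braid] at hb1r12
    -- second-step equations with cleared denominators
    have hA2 : (X i - X (i+1)) * (X i - X (i+2)) * (X (i+1) - X (i+2)) * a₂ =
        (X i - X (i+2)) * (1 + C Polynomial.X * X (i+2)) *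
          ((1 + C Polynomial.X * X (i+1)) * f -
            (1 + C Polynomial.X * X i) * rename (Equiv.swap i (i+1)) f) -
        (X i - X (i+1)) * (1 + C Polynomial.X * X (i+1)) *
          ((1 + C Polynomial.X * X (i+2)) * rename (Equiv.swap (i+1) (i+2)) f -
            (1 + C Polynomial.X * X i) *
              rename (Equiv.swap (i+1) (i+2)) (rename (Equiv.swap i (i+1)) f)) := by
      linear_combination ((X i - X (i+1)) * (X i - X (i+2))) * ha2 +
        ((X i - X (i+2)) * (1 + C Polynomial.X * X (i+2))) * ha1 -
        ((X i - X (i+1)) * (1 + C Polynomial.X * X (i+1))) * ha1r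
    have hA2r : (X (i+1) - X i) * (X (i+1) - X (i+2)) * (X i - X (i+2)) *
          rename (Equiv.swap i (i+1)) a₂ =
        (X (i+1) - X (i+2)) * (1 + C Polynomial.X * X (i+2)) *
          ((1 + C Polynomial.X * X i) * rename (Equiv.swap i (i+1)) f -
            (1 + C Polynomial.X * X (i+1)) * f) -
        (X (i+1) - X i) * (1 + C Polynomial.X * X i) *
          ((1 + C Polynomial.X * X (i+2)) *
              rename (Equiv.swap i (i+1)) (rename (Equiv.swap (i+1) (i+2)) f) -
            (1 + C Polynomial.X * X (i+1)) *
              rename (Equiv.swap i (i+1)) (rename (Equiv.swap (i+1) (i+2))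
                (rename (Equiv.swap i (i+1)) f))) := by
      linear_combination ((X (i+1) - X i) * (X (i+1) - X (i+2))) * ha2r +
        ((X (i+1) - X (i+2)) * (1 + C Polynomial.X * X (i+2))) * ha1r1 -
        ((X (i+1) - X i) * (1 + C Polynomial.X * X i)) * ha1r21
    have hB2 : (X i - X (i+1)) * (X i - X (i+2)) * (X (i+1) - X (i+2)) * b₂ =
        (X i - X (i+2)) * (1 + C Polynomial.X * X (i+1)) *
          ((1 + C Polynomial.X * X (i+2)) * f -
            (1 + C Polynomial.X * X (i+1)) * rename (Equiv.swap (i+1) (i+2)) f) -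
        (X (i+1) - X (i+2)) * (1 + C Polynomial.X * X i) *
          ((1 + C Polynomial.X * X (i+2)) * rename (Equiv.swap i (i+1)) f -
            (1 + C Polynomial.X * X i) *
              rename (Equiv.swap i (i+1)) (rename (Equiv.swap (i+1) (i+2)) f)) := by
      linear_combination ((X i - X (i+2)) * (X (i+1) - X (i+2))) * hb2 +
        ((X i - X (i+2)) * (1 + C Polynomial.X * X (i+1))) * hb1 -
        ((X (i+1) - X (i+2)) * (1 + C Polynomial.X * X i)) * hb1r
    have hB2r : (X i - X (i+1)) * (X i - X (i+2)) * (X (i+2) - X (i+1)) *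
          rename (Equiv.swap (i+1) (i+2)) b₂ =
        (X i - X (i+1)) * (1 + C Polynomial.X * X (i+2)) *
          ((1 + C Polynomial.X * X (i+1)) * rename (Equiv.swap (i+1) (i+2)) f -
            (1 + C Polynomial.X * X (i+2)) * f) -
        (X (i+2) - X (i+1)) * (1 + C Polynomial.X * X i) *
          ((1 + C Polynomial.X * X (i+1)) *
              rename (Equiv.swap (i+1) (i+2)) (rename (Equiv.swap i (i+1)) f) -
            (1 + C Polynomial.X * X i) *
              rename (Equiv.swap i (i+1)) (rename (Equiv.swap (i+1) (i+2))
                (rename (Equiv.swap i (i+1)) f))) := by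
      linear_combination ((X i - X (i+1)) * (X (i+2) - X (i+1))) * hb2r +
        ((X i - X (i+1)) * (1 + C Polynomial.X * X (i+2))) * hb1r2 -
        ((X (i+2) - X (i+1)) * (1 + C Polynomial.X * X i)) * hb1r12
    have key : ((X i - X (i+1))^2 * ((X (i+1) - X (i+2))^2 * (X i - X (i+2)))) * a₃ =
        ((X i - X (i+1))^2 * ((X (i+1) - X (i+2))^2 * (X i - X (i+2)))) * b₃ := by
      linear_combination
        ((X (i+1) - X (i+2))^2 * (X i - X (i+1)) * (X i - X (i+2))) * ha3 +
        ((X (i+1) - X (i+2)) * (1 + C Polynomial.X * X (i+1))) * hA2 +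
        ((X (i+1) - X (i+2)) * (1 + C Polynomial.X * X i)) * hA2r -
        ((X i - X (i+1))^2 * (X (i+1) - X (i+2)) * (X i - X (i+2))) * hb3 -
        ((X i - X (i+1)) * (1 + C Polynomial.X * X (i+2))) * hB2 -
        ((X i - X (i+1)) * (1 + C Polynomial.X * X (i+1))) * hB2r
    have hM : ((X i - X (i+1))^2 * ((X (i+1) - X (i+2))^2 * (X i - X (i+2))) :
        MvPolynomial ℕ (Polynomial ℤ)) ≠ 0 :=
      mul_ne_zero (pow_ne_zero _ (Xsub_ne _ _ (by omega)))
        (mul_ne_zero (pow_ne_zero _ (Xsub_ne _ _ (by omega))) (Xsub_ne _ _ (by omega)))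
    exact mul_left_cancel₀ hM key
  · intro i j hij f a₁ a₂ b₁ b₂ ha1 ha2 hb1 hb2
    unfold IsKDD at ha1 ha2 hb1 hb2
    have sji : (Equiv.swap j (j+1)) i = i :=
      Equiv.swap_apply_of_ne_of_ne (by omega) (by omega)
    have sji1 : (Equiv.swap j (j+1)) (i+1) = i+1 :=
      Equiv.swap_apply_of_ne_of_ne (by omega) (by omega)
    have sij : (Equiv.swap i (i+1)) j = j :=
      Equiv.swap_apply_of_ne_of_ne (by omega) (by omega)
    have sij1 : (Equiv.swap i (i+1)) (j+1) = j+1 :=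
      Equiv.swap_apply_of_ne_of_ne (by omega) (by omega)
    have ha1r := congrArg (rename (Equiv.swap j (j+1))) ha1
    have hb1r := congrArg (rename (Equiv.swap i (i+1))) hb1
    simp only [map_mul, map_sub, map_add, map_one, rename_X, rename_C,
      sji, sji1, sij, sij1] at ha1r hb1r
    rw [rename_comm_swaps i j hij] at hb1r
    have key : ((X i - X (i+1)) * (X j - X (j+1))) * a₂ =
        ((X i - X (i+1)) * (X j - X (j+1))) * b₂ := by
      linear_combination (X i - X (i+1)) * ha2 +
        (1 + C Polynomial.X * X (j+1)) * ha1 -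
        (1 + C Polynomial.X * X j) * ha1r -
        (X j - X (j+1)) * hb2 -
        (1 + C Polynomial.X * X (i+1)) * hb1 +
        (1 + C Polynomial.X * X i) * hb1r
    have hM : ((X i - X (i+1)) * (X j - X (j+1)) :
        MvPolynomial ℕ (Polynomial ℤ)) ≠ 0 :=
      mul_ne_zero (Xsub_ne _ _ (by omega)) (Xsub_ne _ _ (by omega))
    exact mul_left_cancel₀ hM key
end
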